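/- Let n ∈ ℕ, t, λ ∈ ℂ, and let p be a monic polynomial of degree n over ℂ satisfying p''(x) + (2x² + t)·p'(x) − 2n·x·p(x) = λ·p(x) for all x ∈ ℂ. Set F(x) := p(x)·exp(θ(x;t)) and suppose that the ray integrals are all equal: I₁(F²) = I₃(F²) = I₅(F²) (equivalently ∫_γ F² dx = 0 and ∫_γ̃ F² dx = 0). Then there exists a polynomial r over ℂ with r''(x) + (2x² + t)·r'(x) − 2n·x·r(x) − λ·r(x) = p(x) for all x ∈ ℂ; that is, λ is a repeated eigenvalue admitting a polynomial generalized eigenvector. -/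

import Mathlib

/-- Direction at infinity of argument kπ/3. -/
noncomputable def rayDir (k : ℕ) : ℂ := Complex.exp ((k : ℂ) * Real.pi * Complex.I / 3)

/-- Ray integral I_k(f) = ω_k · ∫₀^∞ f(r·ω_k) dr. -/
noncomputable def rayIntegral (k : ℕ) (f : ℂ → ℂ) : ℂ :=
  rayDir k * ∫ r in Set.Ioi (0 : ℝ), f ((r : ℂ) * rayDir k)

/-!
Write `w = exp (2θ) = exp (2x³/3 + tx)`, so that `F² = p² w`, and `D s = s' + (2x² + t) s`, so
that `(D s) w = (s w)'`. Along each ray `∫ (D s) w = -s(0)`, hence the wedge functionals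
`A = I₃ - I₁` and `B = I₃ - I₅` of `g ↦ g w` vanish on the range of `D`. Every polynomial is
`D s + a + b x`, and `A`, `B` are independent on `span {1, x}`: as functions of `t`, `A 1` and
`B 1` solve the Airy equation `y'' = -(t/2) y`, with derivatives `A x` and `B x`, so the Wronskian
`A 1 * B x - A x * B 1` does not depend on `t`, and at `t = 0` it is explicit and nonzero. Hence
`ker A ∩ ker B = range D`.

Let `L` be the operator of the eigen-equation. If `p ∉ range L`, then `p = L q₀ + c₀` with
`c₀ ≠ 0` (below degree `n`, `L` raises the degree by exactly one), and the Lagrange identity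
`(L q) p - q (L p) = D (q' p - q p')` puts every `xʲ p`, `j ≤ n`, into `range D + ℂ p²`, which
lies in `ker A ∩ ker B = range D` by hypothesis. But for `q ≠ 0` the `xⁱ q`, `i ≤ deg q`, never
all lie in `range D`: writing `q = D s`, the Leibniz rule shows that the same would hold for `s`,
which has smaller degree.
-/

open Polynomial MeasureTheory Set Filter Asymptotics

section

variable {K : Type*} [Field K]

theorem exists_eq_apply_add_degree_lt (L : K[X] →ₗ[K] K[X]) (m N : ℕ)
    (hL : ∀ d, d + m < N → (L (X ^ d)).natDegree ≤ d + m ∧ (L (X ^ d)).coeff (d + m) ≠ 0)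
    (g : K[X]) (hg : g.degree < N) : ∃ q r, g = L q + r ∧ r.degree < m := by
  induction N generalizing g with
  | zero => exact ⟨0, g, by simp, hg.trans_le (by simp)⟩
  | succ N ih =>
    by_cases hNm : N < m
    · exact ⟨0, g, by simp, hg.trans_le (by exact_mod_cast hNm)⟩
    obtain ⟨d, rfl⟩ := Nat.exists_eq_add_of_le' (not_lt.mp hNm)
    obtain ⟨hdeg, hlead⟩ := hL d (by omega)
    set e := g.coeff (d + m) / (L (X ^ d)).coeff (d + m)
    have hg' : (g - e • L (X ^ d)).degree < ↑(d + m) := by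
      rw [degree_lt_iff_coeff_zero]
      intro i hi
      rcases hi.eq_or_lt with rfl | hi
      · simp [e, hlead]
      · rw [coeff_sub, coeff_smul, coeff_eq_zero_of_degree_lt (hg.trans_le ?_),
          coeff_eq_zero_of_natDegree_lt (hdeg.trans_lt hi), smul_zero, sub_zero]
        exact_mod_cast hi
    obtain ⟨q, r, hqr, hr⟩ := ih (fun d' hd' => hL d' (by omega)) _ hg'
    exact ⟨q + e • X ^ d, r, by rw [map_add, map_smul, add_right_comm, ← hqr, sub_add_cancel], hr⟩

noncomputable def twistedDeriv (τ : K) : K[X] →ₗ[K] K[X] :=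
  derivative + LinearMap.mulLeft K (2 * X ^ 2 + C τ)

@[simp]
theorem twistedDeriv_apply (τ : K) (s : K[X]) :
    twistedDeriv τ s = derivative s + (2 * X ^ 2 + C τ) * s := rfl

theorem twistedDeriv_mul (τ : K) (f s : K[X]) :
    twistedDeriv τ (f * s) = derivative f * s + f * twistedDeriv τ s := by
  simp only [twistedDeriv_apply, derivative_mul]; ring

theorem natDegree_twistedDeriv_le (τ : K) (s : K[X]) :
    (twistedDeriv τ s).natDegree ≤ s.natDegree + 2 := by
  rw [twistedDeriv_apply]
  refine natDegree_add_le_of_degree_le ((natDegree_derivative_le s).trans (by omega)) ?_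
  refine natDegree_mul_le.trans ?_
  have : (2 * X ^ 2 + C τ : K[X]).natDegree ≤ 2 := by compute_degree
  omega

theorem coeff_twistedDeriv_natDegree_add_two (τ : K) (s : K[X]) :
    (twistedDeriv τ s).coeff (s.natDegree + 2) = 2 * s.leadingCoeff := by
  have hder : (derivative s).coeff (s.natDegree + 2) = 0 :=
    coeff_eq_zero_of_natDegree_lt ((natDegree_derivative_le s).trans_lt (by omega))
  have hs : s.coeff (s.natDegree + 2) = 0 := coeff_eq_zero_of_natDegree_lt (by omega)
  rw [twistedDeriv_apply, add_mul, coeff_add, coeff_add, hder, mul_assoc, coeff_ofNat_mul,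
    coeff_X_pow_mul, coeff_C_mul, hs, leadingCoeff]
  ring

noncomputable def eigenOp (t lam : K) (n : ℕ) : K[X] →ₗ[K] K[X] :=
  twistedDeriv t ∘ₗ derivative - LinearMap.mulLeft K (C (2 * (n : K)) * X + C lam)

@[simp]
theorem eigenOp_apply (t lam : K) (n : ℕ) (q : K[X]) :
    eigenOp t lam n q = derivative (derivative q) + (2 * X ^ 2 + C t) * derivative q
      - (C (2 * (n : K)) * X + C lam) * q := rfl

theorem eval_eigenOp (t lam : K) (n : ℕ) (q : K[X]) (x : K) :
    (eigenOp t lam n q).eval x = (derivative (derivative q)).eval x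
      + (2 * x ^ 2 + t) * (derivative q).eval x - 2 * (n : K) * x * q.eval x - lam * q.eval x := by
  simp only [eigenOp_apply, eval_sub, eval_add, eval_mul, eval_pow, eval_X, eval_C, eval_ofNat]
  ring

theorem eigenOp_mul_sub_mul_eigenOp (t lam : K) (n : ℕ) (p q : K[X]) :
    eigenOp t lam n q * p - q * eigenOp t lam n p
      = twistedDeriv t (derivative q * p - q * derivative p) := by
  simp only [eigenOp_apply, twistedDeriv_apply, derivative_sub, derivative_mul]; ring

-- `X ^ (d - 1)` truncates at `d = 0`, where its coefficient vanishes anyway.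
theorem eigenOp_X_pow_succ (t lam : K) (n d : ℕ) :
    eigenOp t lam n (X ^ (d + 1)) = C (2 * ((d : K) + 1 - n)) * X ^ (d + 2)
      + (C (((d : K) + 1) * d) * X ^ (d - 1) + C (((d : K) + 1) * t) * X ^ d
        - C lam * X ^ (d + 1)) := by
  have hder : derivative (X ^ (d + 1) : K[X]) = C ((d : K) + 1) * X ^ d := by
    rw [derivative_X_pow]; push_cast; rfl
  rw [eigenOp_apply, hder, derivative_C_mul_X_pow]
  simp only [map_mul, map_sub, map_natCast, map_ofNat, map_add, map_one]
  ring

theorem natDegree_eigenOp_X_pow_le (t lam : K) (n d : ℕ) :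
    (eigenOp t lam n (X ^ d)).natDegree ≤ d + 1 := by
  rcases d with _ | d
  · simp only [pow_zero, eigenOp_apply, derivative_one, derivative_zero, mul_zero, add_zero,
      zero_sub, natDegree_neg, mul_one]
    compute_degree!
  · rw [eigenOp_X_pow_succ]
    compute_degree

theorem coeff_eigenOp_X_pow (t lam : K) (n d : ℕ) :
    (eigenOp t lam n (X ^ d)).coeff (d + 1) = 2 * ((d : K) - n) := by
  rcases d with _ | d
  · simp
  · rw [eigenOp_X_pow_succ]
    simp only [coeff_add, coeff_sub, coeff_C_mul_X_pow, if_neg (show d + 1 + 1 ≠ d - 1 by omega),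
      if_neg (show d + 1 + 1 ≠ d by omega), if_neg (show d + 1 + 1 ≠ d + 1 by omega), if_true]
    push_cast
    ring

variable [CharZero K]

theorem natDegree_twistedDeriv (τ : K) {s : K[X]} (hs : s ≠ 0) :
    (twistedDeriv τ s).natDegree = s.natDegree + 2 := by
  refine (natDegree_twistedDeriv_le τ s).antisymm (le_natDegree_of_ne_zero ?_)
  rw [coeff_twistedDeriv_natDegree_add_two]
  exact mul_ne_zero two_ne_zero (leadingCoeff_ne_zero.mpr hs)

theorem exists_eq_twistedDeriv_add (τ : K) (g : K[X]) :
    ∃ s a b, g = twistedDeriv τ s + C a + C b * X := by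
  have hL (d : ℕ) :
      (twistedDeriv τ (X ^ d)).natDegree ≤ d + 2 ∧ (twistedDeriv τ (X ^ d)).coeff (d + 2) ≠ 0 := by
    have hdeg := natDegree_twistedDeriv_le τ (X ^ d : K[X])
    have hcoeff := coeff_twistedDeriv_natDegree_add_two τ (X ^ d : K[X])
    rw [natDegree_X_pow] at hdeg hcoeff
    exact ⟨hdeg, by rw [hcoeff, leadingCoeff_X_pow, mul_one]; exact two_ne_zero⟩
  obtain ⟨s, r, rfl, hr⟩ := exists_eq_apply_add_degree_lt (twistedDeriv τ) 2 _ (fun d _ => hL d) g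
    (degree_le_natDegree.trans_lt (by exact_mod_cast Nat.lt_succ_self _))
  refine ⟨s, r.coeff 0, r.coeff 1, ?_⟩
  conv_lhs => rw [eq_X_add_C_of_degree_le_one (Order.le_of_lt_succ hr)]
  ring

theorem exists_X_pow_mul_notMem_range_twistedDeriv (τ : K) {q : K[X]} (hq : q ≠ 0) :
    ∃ i ≤ q.natDegree, X ^ i * q ∉ LinearMap.range (twistedDeriv τ) := by
  obtain ⟨N, hN⟩ : ∃ N, q.natDegree = N := ⟨_, rfl⟩
  induction N using Nat.strong_induction_on generalizing q with
  | _ N ih =>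
    by_contra! hmem
    obtain ⟨s, hs⟩ := hmem 0 (Nat.zero_le _)
    rw [pow_zero, one_mul] at hs
    have hs0 : s ≠ 0 := by
      rintro rfl
      exact hq (by rw [← hs, map_zero])
    have hdeg : q.natDegree = s.natDegree + 2 := by rw [← hs, natDegree_twistedDeriv τ hs0]
    obtain ⟨i, hi, hnot⟩ := ih s.natDegree (by omega) hs0 rfl
    obtain ⟨s', hs'⟩ := hmem (i + 1) (by omega)
    -- Leibniz rule, using `D s = q` and `D s' = X^(i+1) q`.
    have hleib : ((i : K) + 1) • (X ^ i * s) = twistedDeriv τ (X ^ (i + 1) * s - s') := by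
      rw [map_sub, hs', twistedDeriv_mul, hs, derivative_X_pow, smul_eq_C_mul]
      push_cast
      ring
    apply hnot
    have hi1 : (i : K) + 1 ≠ 0 := by exact_mod_cast Nat.succ_ne_zero i
    rw [← inv_smul_smul₀ hi1 (X ^ i * s), hleib]
    exact Submodule.smul_mem _ _ (LinearMap.mem_range_self _ _)

theorem ker_inf_ker_le_range_twistedDeriv {τ : K}
    {A B : K[X] →ₗ[K] K} (hA : A ∘ₗ twistedDeriv τ = 0) (hB : B ∘ₗ twistedDeriv τ = 0)
    (hW : A 1 * B X - A X * B 1 ≠ 0) :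
    LinearMap.ker A ⊓ LinearMap.ker B ≤ LinearMap.range (twistedDeriv τ) := by
  rintro g ⟨hgA, hgB⟩
  obtain ⟨s, a, b, rfl⟩ := exists_eq_twistedDeriv_add τ g
  have hval (L : K[X] →ₗ[K] K) (hL : L ∘ₗ twistedDeriv τ = 0) :
      L (twistedDeriv τ s + C a + C b * X) = a * L 1 + b * L X := by
    rw [map_add, map_add, ← LinearMap.comp_apply, hL, ← smul_eq_C_mul, ← mul_one (C a),
      ← smul_eq_C_mul, map_smul, map_smul]
    simp
  replace hgA : a * A 1 + b * A X = 0 := hval A hA ▸ hgA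
  replace hgB : a * B 1 + b * B X = 0 := hval B hB ▸ hgB
  have ha : a * (A 1 * B X - A X * B 1) = 0 := by linear_combination B X * hgA - A X * hgB
  have hb : b * (A 1 * B X - A X * B 1) = 0 := by linear_combination A 1 * hgB - B 1 * hgA
  rw [(mul_eq_zero.mp ha).resolve_right hW, (mul_eq_zero.mp hb).resolve_right hW]
  simp

theorem exists_eq_eigenOp_add_C (t lam : K) (n : ℕ) {g : K[X]} (hg : g.natDegree ≤ n) :
    ∃ q c, g = eigenOp t lam n q + C c := by
  have hL (d : ℕ) (hd : d + 1 < n + 1) : (eigenOp t lam n (X ^ d)).natDegree ≤ d + 1 ∧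
      (eigenOp t lam n (X ^ d)).coeff (d + 1) ≠ 0 := by
    refine ⟨natDegree_eigenOp_X_pow_le t lam n d, ?_⟩
    rw [coeff_eigenOp_X_pow]
    exact mul_ne_zero two_ne_zero (sub_ne_zero.mpr (by exact_mod_cast (by omega : d ≠ n)))
  obtain ⟨q, r, rfl, hr⟩ := exists_eq_apply_add_degree_lt (eigenOp t lam n) 1 (n + 1) hL g
    (degree_le_natDegree.trans_lt (by exact_mod_cast Nat.lt_succ_of_le hg))
  exact ⟨q, r.coeff 0, by rw [← eq_C_of_degree_le_zero (Order.le_of_lt_succ hr)]⟩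

theorem X_pow_mul_mem_range_twistedDeriv_sup_span (t lam : K) (n : ℕ) {p : K[X]}
    (hp : eigenOp t lam n p = 0) (hdeg : p.natDegree = n)
    (hnot : p ∉ LinearMap.range (eigenOp t lam n)) {j : ℕ} (hj : j ≤ n) :
    X ^ j * p ∈ LinearMap.range (twistedDeriv t) ⊔ K ∙ (p * p) := by
  have hmul (q : K[X]) : eigenOp t lam n q * p ∈ LinearMap.range (twistedDeriv t) := by
    rw [← sub_zero (eigenOp t lam n q * p), ← mul_zero q, ← hp, eigenOp_mul_sub_mul_eigenOp]
    exact LinearMap.mem_range_self _ _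
  obtain ⟨q₀, c₀, hq₀⟩ := exists_eq_eigenOp_add_C t lam n hdeg.le
  obtain ⟨q, c, hq⟩ := exists_eq_eigenOp_add_C t lam n ((natDegree_X_pow_le j).trans hj)
  have hc₀ : c₀ ≠ 0 := by
    rintro rfl
    exact hnot ⟨q₀, by rw [hq₀, map_zero, add_zero]⟩
  have hC : C (c / c₀) * C c₀ = C c := by rw [← C_mul, div_mul_cancel₀ c hc₀]
  have hsplit : X ^ j * p = eigenOp t lam n q * p
      + (c / c₀) • (p * p - eigenOp t lam n q₀ * p) := by
    rw [smul_eq_C_mul]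
    linear_combination p * hq - C (c / c₀) * p * hq₀ - p * hC
  rw [hsplit]
  refine add_mem (Submodule.mem_sup_left (hmul q)) (Submodule.smul_mem _ _ (sub_mem ?_ ?_))
  · exact Submodule.mem_sup_right (Submodule.mem_span_singleton_self _)
  · exact Submodule.mem_sup_left (hmul q₀)

end

theorem integrableOn_pow_mul_exp_cubic {a : ℝ} (ha : a < 0) (c : ℝ) (j : ℕ) :
    IntegrableOn (fun r : ℝ => r ^ j * Real.exp (a * r ^ 3 + c * r)) (Ioi 0) := by
  refine integrable_of_isBigO_exp_neg one_pos (by fun_prop) ?_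
  have hpow : (fun r : ℝ => r ^ j) =O[atTop] fun r => Real.exp (1 * r) :=
    (isLittleO_pow_exp_pos_mul_atTop j one_pos).isBigO
  have hexp : (fun r : ℝ => Real.exp (a * r ^ 3 + c * r)) =O[atTop] fun r => Real.exp (-2 * r) := by
    refine IsBigO.of_bound 1 ?_
    filter_upwards [eventually_ge_atTop 1, eventually_ge_atTop ((c + 2) / -a)] with r hr1 hrc
    have har : c + 2 ≤ -a * r := by rwa [div_le_iff₀ (neg_pos.mpr ha), mul_comm] at hrc
    rw [Real.norm_of_nonneg (Real.exp_pos _).le, Real.norm_of_nonneg (Real.exp_pos _).le, one_mul,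
      Real.exp_le_exp]
    have hr0 : 0 ≤ r := zero_le_one.trans hr1
    have hra : 0 ≤ -a * r * (r - 1) :=
      mul_nonneg (mul_nonneg (neg_nonneg.mpr ha.le) hr0) (sub_nonneg.mpr hr1)
    have har2 : c + 2 ≤ -a * r ^ 2 := har.trans (by nlinarith)
    nlinarith [mul_le_mul_of_nonneg_left har2 hr0]
  refine (hpow.mul hexp).congr_right fun r => ?_
  rw [← Real.exp_add]
  ring_nf

theorem integral_pow_mul_exp_cubic_pos {a : ℝ} (ha : a < 0) (j : ℕ) :
    0 < ∫ r in Ioi (0 : ℝ), r ^ j * Real.exp (a * r ^ 3) := by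
  have hint := integrableOn_pow_mul_exp_cubic ha 0 j
  simp only [zero_mul, add_zero] at hint
  rw [setIntegral_pos_iff_support_of_nonneg_ae _ hint]
  · have hsupp : Ioi 0 ⊆ Function.support fun r : ℝ => r ^ j * Real.exp (a * r ^ 3) :=
      fun r (hr : 0 < r) => (by positivity : r ^ j * Real.exp (a * r ^ 3) ≠ 0)
    rw [inter_eq_right.mpr hsupp, Real.volume_Ioi]
    exact ENNReal.zero_lt_top
  · filter_upwards [ae_restrict_mem measurableSet_Ioi] with r (hr : 0 < r)
    positivity

noncomputable def airyWeight (τ x : ℂ) : ℂ := Complex.exp (2 * x ^ 3 / 3 + τ * x)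

@[fun_prop]
theorem continuous_airyWeight (τ : ℂ) : Continuous (airyWeight τ) := by
  unfold airyWeight; fun_prop

theorem hasDerivAt_airyWeight (τ z : ℂ) :
    HasDerivAt (airyWeight τ) (airyWeight τ z * (2 * z ^ 2 + τ)) z :=
  HasDerivAt.cexp <| ((((hasDerivAt_pow 3 z).const_mul 2).div_const 3).add
    ((hasDerivAt_id z).const_mul τ)).congr_deriv (by norm_num; ring)

theorem hasDerivAt_eval_mul_airyWeight (τ : ℂ) (s : ℂ[X]) (z : ℂ) :
    HasDerivAt (fun z => s.eval z * airyWeight τ z)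
      ((twistedDeriv τ s).eval z * airyWeight τ z) z := by
  refine ((s.hasDerivAt z).mul (hasDerivAt_airyWeight τ z)).congr_deriv ?_
  simp only [twistedDeriv_apply, eval_add, eval_mul, eval_pow, eval_X, eval_C, eval_ofNat]
  ring

theorem norm_ofReal_mul_pow_mul_airyWeight (τ ω : ℂ) (j : ℕ) {r : ℝ} (hr : 0 ≤ r) :
    ‖((r : ℂ) * ω) ^ j * airyWeight τ (r * ω)‖
      = ‖ω‖ ^ j * (r ^ j * Real.exp (2 / 3 * (ω ^ 3).re * r ^ 3 + (τ * ω).re * r)) := by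
  have hre : (2 * ((r : ℂ) * ω) ^ 3 / 3 + τ * (r * ω)).re
      = 2 / 3 * (ω ^ 3).re * r ^ 3 + (τ * ω).re * r := by
    simp [mul_pow, ← Complex.ofReal_pow]
    ring
  rw [norm_mul, norm_pow, norm_mul, Complex.norm_real, Real.norm_of_nonneg hr, airyWeight,
    Complex.norm_exp, hre, mul_pow]
  ring

noncomputable def rayMoment (ω : ℂ) (j : ℕ) (τ : ℂ) : ℂ :=
  ω * ∫ r in Ioi (0 : ℝ), ((r : ℂ) * ω) ^ j * airyWeight τ (r * ω)

section

variable {ω : ℂ}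

theorem integrableOn_ray_pow_mul_airyWeight (hω : (ω ^ 3).re < 0) (τ : ℂ) (j : ℕ) :
    IntegrableOn (fun r : ℝ => ((r : ℂ) * ω) ^ j * airyWeight τ (r * ω)) (Ioi 0) := by
  refine ((integrableOn_pow_mul_exp_cubic (by linarith : 2 / 3 * (ω ^ 3).re < 0) (τ * ω).re
    j).const_mul (‖ω‖ ^ j)).mono' (by fun_prop : Continuous _).aestronglyMeasurable ?_
  filter_upwards [ae_restrict_mem measurableSet_Ioi] with r hr
  exact (norm_ofReal_mul_pow_mul_airyWeight τ ω j hr.le).le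

theorem integrableOn_ray_eval_mul_airyWeight (hω : (ω ^ 3).re < 0) (τ : ℂ) (g : ℂ[X]) :
    IntegrableOn (fun r : ℝ => g.eval (r * ω) * airyWeight τ (r * ω)) (Ioi 0) := by
  induction g using Polynomial.induction_on' with
  | add f g hf hg =>
    simp only [eval_add, add_mul]
    exact hf.add hg
  | monomial j a =>
    simp only [eval_monomial, mul_assoc]
    exact (integrableOn_ray_pow_mul_airyWeight hω τ j).const_mul a

noncomputable def rayFunctional (hω : (ω ^ 3).re < 0) (τ : ℂ) : ℂ[X] →ₗ[ℂ] ℂ where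
  toFun g := ω * ∫ r in Ioi (0 : ℝ), g.eval (r * ω) * airyWeight τ (r * ω)
  map_add' f g := by
    simp only [eval_add, add_mul]
    rw [integral_add (integrableOn_ray_eval_mul_airyWeight hω τ f)
      (integrableOn_ray_eval_mul_airyWeight hω τ g), mul_add]
  map_smul' c g := by
    simp only [eval_smul, smul_eq_mul, mul_assoc, integral_const_mul, RingHom.id_apply]
    ring

theorem rayFunctional_apply (hω : (ω ^ 3).re < 0) (τ : ℂ) (g : ℂ[X]) :
    rayFunctional hω τ g = ω * ∫ r in Ioi (0 : ℝ), g.eval (r * ω) * airyWeight τ (r * ω) := rfl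

theorem rayFunctional_twistedDeriv (hω : (ω ^ 3).re < 0) (τ : ℂ) (s : ℂ[X]) :
    rayFunctional hω τ (twistedDeriv τ s) = -s.eval 0 := by
  set f : ℝ → ℂ := fun r => s.eval (r * ω) * airyWeight τ (r * ω)
  have hderiv (r : ℝ) :
      HasDerivAt f (ω * ((twistedDeriv τ s).eval (r * ω) * airyWeight τ (r * ω))) r := by
    exact (((hasDerivAt_eval_mul_airyWeight τ s (r * ω)).comp (r : ℂ)
      (hasDerivAt_mul_const ω)).comp_ofReal).congr_deriv (mul_comm _ _)
  have hint := (integrableOn_ray_eval_mul_airyWeight hω τ (twistedDeriv τ s)).const_mul ω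
  have hlim := tendsto_zero_of_hasDerivAt_of_integrableOn_Ioi (fun r _ => hderiv r) hint
    (integrableOn_ray_eval_mul_airyWeight hω τ s)
  rw [rayFunctional_apply, ← integral_const_mul,
    integral_Ioi_of_hasDerivAt_of_tendsto' (fun r _ => hderiv r) hint hlim]
  simp [f, airyWeight]

theorem sub_rayFunctional_comp_twistedDeriv {ω' : ℂ} (hω : (ω ^ 3).re < 0)
    (hω' : (ω' ^ 3).re < 0) (τ : ℂ) :
    (rayFunctional hω τ - rayFunctional hω' τ) ∘ₗ twistedDeriv τ = 0 := by
  refine LinearMap.ext fun s => ?_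
  simp only [LinearMap.comp_apply, LinearMap.sub_apply, rayFunctional_twistedDeriv, sub_self,
    LinearMap.zero_apply]

theorem rayFunctional_X_pow (hω : (ω ^ 3).re < 0) (τ : ℂ) (j : ℕ) :
    rayFunctional hω τ (X ^ j) = rayMoment ω j τ := by
  simp [rayFunctional_apply, rayMoment]

theorem two_mul_rayMoment_two_add (hω : (ω ^ 3).re < 0) (τ : ℂ) :
    2 * rayMoment ω 2 τ + τ * rayMoment ω 0 τ = -1 := by
  have h := rayFunctional_twistedDeriv hω τ 1
  rw [show twistedDeriv τ 1 = (2 : ℂ) • X ^ 2 + τ • X ^ 0 by simp [smul_eq_C_mul]; rfl, map_add,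
    map_smul, map_smul, rayFunctional_X_pow, rayFunctional_X_pow] at h
  simpa using h

theorem hasDerivAt_rayMoment (hω : (ω ^ 3).re < 0) (j : ℕ) (τ : ℂ) :
    HasDerivAt (rayMoment ω j) (rayMoment ω (j + 1) τ) τ := by
  have hbound : ∀ᵐ (r : ℝ) ∂(volume.restrict (Ioi (0 : ℝ))), ∀ τ' ∈ Metric.ball τ 1,
      ‖((r : ℂ) * ω) ^ (j + 1) * airyWeight τ' (r * ω)‖
        ≤ ‖ω‖ ^ (j + 1) * (r ^ (j + 1)
          * Real.exp (2 / 3 * (ω ^ 3).re * r ^ 3 + (‖τ‖ + 1) * ‖ω‖ * r)) := by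
    filter_upwards [ae_restrict_mem measurableSet_Ioi] with r (hr : 0 < r) τ' hτ'
    rw [norm_ofReal_mul_pow_mul_airyWeight τ' ω _ hr.le]
    have hτ'ω : (τ' * ω).re ≤ (‖τ‖ + 1) * ‖ω‖ := by
      refine (Complex.re_le_norm _).trans ?_
      rw [norm_mul]
      gcongr
      linarith [norm_le_norm_add_norm_sub' τ' τ, mem_ball_iff_norm.mp hτ']
    gcongr
  have hderiv : ∀ᵐ (r : ℝ) ∂(volume.restrict (Ioi (0 : ℝ))), ∀ τ' ∈ Metric.ball τ 1,
      HasDerivAt (fun τ'' => ((r : ℂ) * ω) ^ j * airyWeight τ'' (r * ω))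
        (((r : ℂ) * ω) ^ (j + 1) * airyWeight τ' (r * ω)) τ' := by
    refine ae_of_all _ fun r τ' _ => ?_
    have hlin : HasDerivAt (fun τ'' : ℂ => 2 * ((r : ℂ) * ω) ^ 3 / 3 + τ'' * (r * ω))
        ((r : ℂ) * ω) τ' := by
      simpa using (hasDerivAt_mul_const ((r : ℂ) * ω)).const_add (2 * ((r : ℂ) * ω) ^ 3 / 3)
    exact (hlin.cexp.const_mul _).congr_deriv (by rw [airyWeight]; ring)
  have key := hasDerivAt_integral_of_dominated_loc_of_deriv_le
    (F := fun τ' (r : ℝ) => ((r : ℂ) * ω) ^ j * airyWeight τ' (r * ω))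
    (F' := fun τ' (r : ℝ) => ((r : ℂ) * ω) ^ (j + 1) * airyWeight τ' (r * ω))
    (Metric.ball_mem_nhds τ one_pos)
    (Eventually.of_forall fun τ' => (by fun_prop : Continuous _).aestronglyMeasurable)
    (integrableOn_ray_pow_mul_airyWeight hω τ j) (by fun_prop : Continuous _).aestronglyMeasurable
    hbound ((integrableOn_pow_mul_exp_cubic (by linarith) _ _).const_mul _) hderiv
  exact key.2.const_mul ω

theorem rayMoment_zero (hω : ω ^ 3 = -1) (j : ℕ) :
    rayMoment ω j 0 = ω ^ (j + 1) * ∫ r in Ioi (0 : ℝ), r ^ j * Real.exp (-(2 / 3) * r ^ 3) := by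
  have hint (r : ℝ) : ((r : ℂ) * ω) ^ j * airyWeight 0 (r * ω)
      = ω ^ j * ((r ^ j * Real.exp (-(2 / 3) * r ^ 3) : ℝ) : ℂ) := by
    rw [airyWeight, mul_pow, mul_pow, hω]
    push_cast
    ring_nf
  rw [rayMoment]
  simp_rw [hint]
  rw [integral_const_mul, integral_complex_ofReal]
  ring

end

theorem wronskian_eq_of_hasDerivAt {𝕜 : Type*} [RCLike 𝕜] {f f' g g' q : 𝕜 → 𝕜}
    (hf : ∀ z, HasDerivAt f (f' z) z) (hf' : ∀ z, HasDerivAt f' (q z * f z) z)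
    (hg : ∀ z, HasDerivAt g (g' z) z) (hg' : ∀ z, HasDerivAt g' (q z * g z) z) (z w : 𝕜) :
    f z * g' z - f' z * g z = f w * g' w - f' w * g w := by
  have hW (x : 𝕜) : HasDerivAt (fun x => f x * g' x - f' x * g x) 0 x :=
    (((hf x).mul (hg' x)).sub ((hf' x).mul (hg x))).congr_deriv (by ring)
  exact is_const_of_deriv_eq_zero (fun x => (hW x).differentiableAt) (fun x => (hW x).deriv) z w

section

variable {ω₁ ω₂ ω₃ : ℂ}

theorem hasDerivAt_rayMoment_one_sub (h₁ : (ω₁ ^ 3).re < 0) (h₂ : (ω₂ ^ 3).re < 0) (τ : ℂ) :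
    HasDerivAt (fun τ => rayMoment ω₁ 1 τ - rayMoment ω₂ 1 τ)
      (-τ / 2 * (rayMoment ω₁ 0 τ - rayMoment ω₂ 0 τ)) τ :=
  ((hasDerivAt_rayMoment h₁ 1 τ).sub (hasDerivAt_rayMoment h₂ 1 τ)).congr_deriv
    (by linear_combination (two_mul_rayMoment_two_add h₁ τ - two_mul_rayMoment_two_add h₂ τ) / 2)

theorem rayMoment_wronskian_eq (h₁ : (ω₁ ^ 3).re < 0) (h₂ : (ω₂ ^ 3).re < 0)
    (h₃ : (ω₃ ^ 3).re < 0) (τ σ : ℂ) :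
    (rayMoment ω₁ 0 τ - rayMoment ω₂ 0 τ) * (rayMoment ω₁ 1 τ - rayMoment ω₃ 1 τ)
      - (rayMoment ω₁ 1 τ - rayMoment ω₂ 1 τ) * (rayMoment ω₁ 0 τ - rayMoment ω₃ 0 τ)
    = (rayMoment ω₁ 0 σ - rayMoment ω₂ 0 σ) * (rayMoment ω₁ 1 σ - rayMoment ω₃ 1 σ)
      - (rayMoment ω₁ 1 σ - rayMoment ω₂ 1 σ) * (rayMoment ω₁ 0 σ - rayMoment ω₃ 0 σ) :=
  wronskian_eq_of_hasDerivAt (f := fun τ => rayMoment ω₁ 0 τ - rayMoment ω₂ 0 τ)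
    (g := fun τ => rayMoment ω₁ 0 τ - rayMoment ω₃ 0 τ)
    (fun τ => (hasDerivAt_rayMoment h₁ 0 τ).sub (hasDerivAt_rayMoment h₂ 0 τ))
    (hasDerivAt_rayMoment_one_sub h₁ h₂)
    (fun τ => (hasDerivAt_rayMoment h₁ 0 τ).sub (hasDerivAt_rayMoment h₃ 0 τ))
    (hasDerivAt_rayMoment_one_sub h₁ h₃) τ σ

end

theorem rayDir_one : rayDir 1 = 1 / 2 + ((√3 / 2 : ℝ) : ℂ) * Complex.I := by
  rw [rayDir, show ((1 : ℕ) : ℂ) * Real.pi * Complex.I / 3 = ((Real.pi / 3 : ℝ) : ℂ) * Complex.I by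
    push_cast; ring, Complex.exp_mul_I, ← Complex.ofReal_cos, ← Complex.ofReal_sin,
    Real.cos_pi_div_three, Real.sin_pi_div_three]
  norm_num

theorem rayDir_one_sq_sub_add_one : rayDir 1 ^ 2 - rayDir 1 + 1 = 0 := by
  have hsqrt : ((√3 / 2 : ℝ) : ℂ) ^ 2 = 3 / 4 := by
    rw [← Complex.ofReal_pow, div_pow, Real.sq_sqrt zero_le_three]
    norm_num
  rw [rayDir_one]
  linear_combination (((√3 / 2 : ℝ) : ℂ) ^ 2) * Complex.I_sq - hsqrt

theorem rayDir_eq_pow (k : ℕ) : rayDir k = rayDir 1 ^ k := by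
  rw [rayDir, rayDir, ← Complex.exp_nat_mul]
  push_cast
  ring_nf

theorem rayDir_pow_three {k : ℕ} (hk : Odd k) : rayDir k ^ 3 = -1 := by
  rw [rayDir_eq_pow, ← pow_mul, mul_comm, pow_mul,
    show rayDir 1 ^ 3 = -1 by linear_combination (rayDir 1 + 1) * rayDir_one_sq_sub_add_one,
    hk.neg_one_pow]

theorem re_rayDir_pow_three_neg {k : ℕ} (hk : Odd k) : (rayDir k ^ 3).re < 0 := by
  rw [rayDir_pow_three hk]
  norm_num

theorem one_sub_two_mul_rayDir_one_ne_zero : 1 - 2 * rayDir 1 ≠ 0 := by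
  rw [rayDir_one, show (1 : ℂ) - 2 * (1 / 2 + ((√3 / 2 : ℝ) : ℂ) * Complex.I)
    = -(2 * ((√3 / 2 : ℝ) : ℂ)) * Complex.I by ring]
  refine mul_ne_zero (neg_ne_zero.mpr (mul_ne_zero two_ne_zero ?_)) Complex.I_ne_zero
  exact_mod_cast (by positivity : (√3 / 2 : ℝ) ≠ 0)

theorem rayMoment_rayDir_wronskian_ne_zero (τ : ℂ) :
    (rayMoment (rayDir 3) 0 τ - rayMoment (rayDir 1) 0 τ)
        * (rayMoment (rayDir 3) 1 τ - rayMoment (rayDir 5) 1 τ)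
      - (rayMoment (rayDir 3) 1 τ - rayMoment (rayDir 1) 1 τ)
        * (rayMoment (rayDir 3) 0 τ - rayMoment (rayDir 5) 0 τ) ≠ 0 := by
  rw [rayMoment_wronskian_eq (re_rayDir_pow_three_neg (by decide)) (re_rayDir_pow_three_neg
    (by decide)) (re_rayDir_pow_three_neg (by decide)) τ 0]
  simp only [rayMoment_zero (rayDir_pow_three (by decide : Odd 1)),
    rayMoment_zero (rayDir_pow_three (by decide : Odd 3)),
    rayMoment_zero (rayDir_pow_three (by decide : Odd 5))]
  set c₀ := ∫ r in Ioi (0 : ℝ), r ^ 0 * Real.exp (-(2 / 3) * r ^ 3)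
  set c₁ := ∫ r in Ioi (0 : ℝ), r ^ 1 * Real.exp (-(2 / 3) * r ^ 3)
  set a := rayDir 1
  have h₂ : a ^ 2 - a + 1 = 0 := rayDir_one_sq_sub_add_one
  have h₃ : rayDir 3 = -1 := by rw [rayDir_eq_pow]; linear_combination (a + 1) * h₂
  have h₅ : rayDir 5 = -a ^ 2 := by
    rw [rayDir_eq_pow]; linear_combination (a ^ 3 + a ^ 2) * h₂
  suffices 3 * (1 - 2 * a) * (c₀ * c₁) ≠ 0 by
    convert this using 1
    rw [h₃, h₅]
    linear_combination (a ^ 3 + 3 * a ^ 2 + 2 * a - 3) * (c₀ * c₁ : ℂ) * h₂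
  refine mul_ne_zero (mul_ne_zero three_ne_zero one_sub_two_mul_rayDir_one_ne_zero)
    (mul_ne_zero ?_ ?_)
  · exact_mod_cast (integral_pow_mul_exp_cubic_pos (by norm_num) 0).ne'
  · exact_mod_cast (integral_pow_mul_exp_cubic_pos (by norm_num) 1).ne'

-- `g ↦ ∫_γ g w` and `g ↦ ∫_γ̃ g w` for `w = airyWeight t`, with the wedge contours `γ`, `γ̃`.
noncomputable def wedgeFunctional₁₃ (t : ℂ) : ℂ[X] →ₗ[ℂ] ℂ :=
  rayFunctional (re_rayDir_pow_three_neg (by decide : Odd 3)) t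
    - rayFunctional (re_rayDir_pow_three_neg (by decide : Odd 1)) t

noncomputable def wedgeFunctional₅₃ (t : ℂ) : ℂ[X] →ₗ[ℂ] ℂ :=
  rayFunctional (re_rayDir_pow_three_neg (by decide : Odd 3)) t
    - rayFunctional (re_rayDir_pow_three_neg (by decide : Odd 5)) t

theorem ker_inf_ker_wedgeFunctional (t : ℂ) :
    LinearMap.ker (wedgeFunctional₁₃ t) ⊓ LinearMap.ker (wedgeFunctional₅₃ t)
      = LinearMap.range (twistedDeriv t) := by
  have h₁₃ := sub_rayFunctional_comp_twistedDeriv (re_rayDir_pow_three_neg (by decide : Odd 3))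
    (re_rayDir_pow_three_neg (by decide : Odd 1)) t
  have h₅₃ := sub_rayFunctional_comp_twistedDeriv (re_rayDir_pow_three_neg (by decide : Odd 3))
    (re_rayDir_pow_three_neg (by decide : Odd 5)) t
  have hW : wedgeFunctional₁₃ t 1 * wedgeFunctional₅₃ t X
      - wedgeFunctional₁₃ t X * wedgeFunctional₅₃ t 1 ≠ 0 := by
    rw [← pow_one (X : ℂ[X]), ← pow_zero (X : ℂ[X])]
    simpa only [wedgeFunctional₁₃, wedgeFunctional₅₃, LinearMap.sub_apply, rayFunctional_X_pow]
      using rayMoment_rayDir_wronskian_ne_zero t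
  exact (ker_inf_ker_le_range_twistedDeriv h₁₃ h₅₃ hW).antisymm
    (le_inf (LinearMap.range_le_ker_iff.mpr h₁₃) (LinearMap.range_le_ker_iff.mpr h₅₃))

theorem rayIntegral_sq_eval_mul_exp {k : ℕ} (hk : Odd k) (t : ℂ) (p : ℂ[X]) :
    rayIntegral k (fun x => (p.eval x * Complex.exp (x ^ 3 / 3 + t * x / 2)) ^ 2)
      = rayFunctional (re_rayDir_pow_three_neg hk) t (p * p) := by
  have hsq (x : ℂ) : (p.eval x * Complex.exp (x ^ 3 / 3 + t * x / 2)) ^ 2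
      = (p * p).eval x * airyWeight t x := by
    rw [mul_pow, ← Complex.exp_nat_mul, eval_mul, airyWeight]
    push_cast
    ring_nf
  simp only [rayIntegral, hsq]
  rfl

/-- if the ray integrals of F² = (p·e^θ)² are all equal (both
wedge-contour integrals of F² vanish), then λ is a repeated eigenvalue: there is a
polynomial generalized eigenvector r. -/
theorem vanishing_integrals_give_repeated_eigenvalue
    (n : ℕ) (t lam : ℂ) (p : Polynomial ℂ) (hmonic : p.Monic) (hdeg : p.natDegree = n)
    (heq : ∀ x : ℂ, (p.derivative.derivative).eval x
        + (2 * x ^ 2 + t) * p.derivative.eval x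
        - 2 * (n : ℂ) * x * p.eval x = lam * p.eval x)
    (h13 : rayIntegral 1 (fun x => (p.eval x * Complex.exp (x ^ 3 / 3 + t * x / 2)) ^ 2)
      = rayIntegral 3 (fun x => (p.eval x * Complex.exp (x ^ 3 / 3 + t * x / 2)) ^ 2))
    (h35 : rayIntegral 3 (fun x => (p.eval x * Complex.exp (x ^ 3 / 3 + t * x / 2)) ^ 2)
      = rayIntegral 5 (fun x => (p.eval x * Complex.exp (x ^ 3 / 3 + t * x / 2)) ^ 2)) :
    ∃ r : Polynomial ℂ, ∀ x : ℂ, (r.derivative.derivative).eval x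
        + (2 * x ^ 2 + t) * r.derivative.eval x
        - 2 * (n : ℂ) * x * r.eval x - lam * r.eval x = p.eval x := by
  have hp : eigenOp t lam n p = 0 := Polynomial.funext fun x => by
    rw [eval_eigenOp, eval_zero]
    linear_combination heq x
  suffices hmem : p ∈ LinearMap.range (eigenOp t lam n) by
    obtain ⟨r, hr⟩ := hmem
    exact ⟨r, fun x => by rw [← eval_eigenOp, hr]⟩
  by_contra hnot
  have hsq : p * p ∈ LinearMap.ker (wedgeFunctional₁₃ t) ⊓ LinearMap.ker (wedgeFunctional₅₃ t) := by
    rw [rayIntegral_sq_eval_mul_exp (by decide), rayIntegral_sq_eval_mul_exp (by decide)] at h13 h35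
    simp only [Submodule.mem_inf, LinearMap.mem_ker, wedgeFunctional₁₃, wedgeFunctional₅₃,
      LinearMap.sub_apply, sub_eq_zero]
    exact ⟨h13.symm, h35⟩
  obtain ⟨i, hi, hnotmem⟩ := exists_X_pow_mul_notMem_range_twistedDeriv t hmonic.ne_zero
  rw [← ker_inf_ker_wedgeFunctional] at hnotmem
  refine hnotmem (sup_le (ker_inf_ker_wedgeFunctional t).ge ?_
    (X_pow_mul_mem_range_twistedDeriv_sup_span t lam n hp hdeg hnot (hi.trans hdeg.le)))
  exact (Submodule.span_singleton_le_iff_mem _ _).mpr hsq
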